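/- Let K₁,...,Kₙ be star bodies in ℝⁿ (positive continuous radial functions on S^{n-1}) and let 1 ≤ r ≤ n. Then the dual Aleksandrov–Fenchel inequality holds: Ṽ(K₁,...,Kₙ) ≤ ∏_{i=1}^{r} Ṽ(Kᵢ,...,Kᵢ,K_{r+1},...,Kₙ)^{1/r}, where in the i-th factor Kᵢ appears r times. Equality holds if and only if K₁,...,K_r are all dilations of each other. -/

import Mathlib

open MeasureTheory Metric Finset

/-- The surface (spherical) measure on the unit sphere `S^{n-1} ⊆ ℝⁿ`. -/
noncomputable def sphereσ (n : ℕ) : Measure (sphere (0 : EuclideanSpace ℝ (Fin n)) 1) :=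
  μH[(n : ℝ) - 1]

/-- The dual mixed volume of an `n`-tuple of radial functions (indices `0,...,n-1`). -/
noncomputable def dualMixedVol (n : ℕ)
    (f : ℕ → (sphere (0 : EuclideanSpace ℝ (Fin n)) 1 → ℝ)) : ℝ :=
  (1 / n) * ∫ u, (∏ j ∈ Finset.range n, f j u) ∂(sphereσ n)

/-!
With `Q = ∏_{r ≤ j < n} ρ_j` and `f_i = Q ρ_i^r` one has `∏_{i<r} f_i^{1/r} = ∏_{j<n} ρ_j`, so the
inequality is Hölder's inequality `∫ ∏ f_i^{1/r} ≤ ∏ (∫ f_i)^{1/r}`. Hölder's inequality follows by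
integrating the weighted AM-GM inequality for the normalized functions `f_i / ∫ f_i`. Everything is
continuous and the spherical measure charges every nonempty open set, so in the equality case AM-GM
is an equality at every point, i.e. the `f_i` (equivalently the `ρ_i`, `i < r`) are proportional.

That the Hausdorff measure of the sphere is finite and charges open sets is seen locally: near a
unit vector `x` the sphere is the graph of a `C¹` map over the hyperplane `xᗮ`, which gives
finiteness, and the `1`-Lipschitz orthogonal projection onto `xᗮ` maps a neighbourhood of `x` in
the sphere onto an open subset of `xᗮ`, which gives positivity.
-/

open Module Topology

def IsDilate {X : Type*} (f g : X → ℝ) : Prop := ∃ c : ℝ, 0 < c ∧ ∀ u, f u = c * g u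

section Holder

variable {X ι : Type*} {s : Finset ι} {w : ι → ℝ} {f : ι → X → ℝ}

lemma continuous_prod_rpow [TopologicalSpace X] (hw : ∀ i ∈ s, 0 ≤ w i)
    (hf : ∀ i ∈ s, Continuous (f i)) :
    Continuous fun u => ∏ i ∈ s, f i u ^ w i :=
  continuous_finsetProd _ fun i hi => (hf i hi).rpow_const fun _ => Or.inr (hw i hi)

section Measure

variable [MeasurableSpace X] {μ : Measure X}

lemma integral_inv_integral_mul_self {g : X → ℝ} (hg : ∫ u, g u ∂μ ≠ 0) :
    ∫ u, (∫ v, g v ∂μ)⁻¹ * g u ∂μ = 1 := by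
  rw [integral_const_mul, inv_mul_cancel₀ hg]

lemma integral_prod_inv_integral_mul_rpow (hfpos : ∀ i ∈ s, ∀ u, 0 < f i u)
    (hint : ∀ i ∈ s, 0 < ∫ u, f i u ∂μ) :
    ∫ u, ∏ i ∈ s, ((∫ v, f i v ∂μ)⁻¹ * f i u) ^ w i ∂μ =
      (∏ i ∈ s, (∫ v, f i v ∂μ) ^ w i)⁻¹ * ∫ u, ∏ i ∈ s, f i u ^ w i ∂μ := by
  rw [← integral_const_mul]
  congr 1 with u
  rw [← prod_inv_distrib, ← prod_mul_distrib]
  exact prod_congr rfl fun i hi => by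
    rw [Real.mul_rpow (inv_nonneg.2 (hint i hi).le) (hfpos i hi u).le,
      Real.inv_rpow (hint i hi).le]

end Measure

variable [TopologicalSpace X] [CompactSpace X] [MeasurableSpace X] [OpensMeasurableSpace X]
  {μ : Measure X} [IsFiniteMeasure μ]

lemma Continuous.integrable_of_compactSpace {g : X → ℝ} (hg : Continuous g) : Integrable g μ :=
  hg.integrable_of_hasCompactSupport (HasCompactSupport.of_compactSpace g)

lemma one_sub_integral_prod_rpow (hw : ∀ i ∈ s, 0 ≤ w i) (hw1 : ∑ i ∈ s, w i = 1)
    (hf : ∀ i ∈ s, Continuous (f i)) (hf1 : ∀ i ∈ s, ∫ u, f i u ∂μ = 1) :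
    1 - ∫ u, ∏ i ∈ s, f i u ^ w i ∂μ =
      ∫ u, (∑ i ∈ s, w i * f i u - ∏ i ∈ s, f i u ^ w i) ∂μ := by
  have hsum : ∫ u, ∑ i ∈ s, w i * f i u ∂μ = 1 := by
    rw [integral_finsetSum _ fun i hi => ((hf i hi).integrable_of_compactSpace).const_mul _, ← hw1]
    exact sum_congr rfl fun i hi => by rw [integral_const_mul, hf1 i hi, mul_one]
  have hcont : Continuous fun u => ∑ i ∈ s, w i * f i u :=
    continuous_finsetSum _ fun i hi => continuous_const.mul (hf i hi)
  rw [integral_sub hcont.integrable_of_compactSpace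
    (continuous_prod_rpow hw hf).integrable_of_compactSpace, hsum]

lemma integral_prod_rpow_le_one (hw : ∀ i ∈ s, 0 ≤ w i) (hw1 : ∑ i ∈ s, w i = 1)
    (hf : ∀ i ∈ s, Continuous (f i)) (hf0 : ∀ i ∈ s, ∀ u, 0 ≤ f i u)
    (hf1 : ∀ i ∈ s, ∫ u, f i u ∂μ = 1) :
    ∫ u, ∏ i ∈ s, f i u ^ w i ∂μ ≤ 1 := by
  have hgap : 0 ≤ ∫ u, (∑ i ∈ s, w i * f i u - ∏ i ∈ s, f i u ^ w i) ∂μ :=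
    integral_nonneg fun u => sub_nonneg.2 <|
      Real.geom_mean_le_arith_mean_weighted s w (f · u) hw hw1 fun i hi => hf0 i hi u
  linarith [one_sub_integral_prod_rpow (μ := μ) hw hw1 hf hf1]

lemma integral_prod_rpow_eq_one_iff [μ.IsOpenPosMeasure] (hw : ∀ i ∈ s, 0 < w i)
    (hw1 : ∑ i ∈ s, w i = 1) (hf : ∀ i ∈ s, Continuous (f i)) (hf0 : ∀ i ∈ s, ∀ u, 0 ≤ f i u)
    (hf1 : ∀ i ∈ s, ∫ u, f i u ∂μ = 1) :
    ∫ u, ∏ i ∈ s, f i u ^ w i ∂μ = 1 ↔ ∀ i ∈ s, ∀ j ∈ s, f i = f j := by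
  have hw0 : ∀ i ∈ s, 0 ≤ w i := fun i hi => (hw i hi).le
  set gap : X → ℝ := fun u => ∑ i ∈ s, w i * f i u - ∏ i ∈ s, f i u ^ w i
  have hgap0 : 0 ≤ gap := fun u => sub_nonneg.2 <|
    Real.geom_mean_le_arith_mean_weighted s w (f · u) hw0 hw1 fun i hi => hf0 i hi u
  have hgap : Continuous gap :=
    (continuous_finsetSum _ fun i hi => continuous_const.mul (hf i hi)).sub
      (continuous_prod_rpow hw0 hf)
  rw [eq_comm, ← sub_eq_zero, one_sub_integral_prod_rpow hw0 hw1 hf hf1,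
    integral_eq_zero_iff_of_nonneg hgap0 hgap.integrable_of_compactSpace,
    hgap.ae_eq_iff_eq μ continuous_zero]
  simp only [funext_iff, Pi.zero_apply, gap, sub_eq_zero, eq_comm (a := ∑ i ∈ s, _)]
  simp only [Real.geom_mean_eq_arith_mean_weighted_iff_of_pos s w (f · _) hw hw1
    fun i hi => hf0 i hi _]
  exact ⟨fun h i hi j hj u => h u i hi j hj, fun h u i hi j hj => h i hi j hj u⟩

lemma integral_pos_of_continuous_of_pos [NeZero μ] {g : X → ℝ} (hg : Continuous g)
    (hgpos : ∀ u, 0 < g u) : 0 < ∫ u, g u ∂μ := by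
  rw [integral_pos_iff_support_of_nonneg (fun u => (hgpos u).le) hg.integrable_of_compactSpace,
    Function.support_eq_univ fun u => (hgpos u).ne']
  exact Measure.measure_univ_pos.2 (NeZero.ne μ)

lemma inv_integral_mul_eq_iff_isDilate [NeZero μ] {g h : X → ℝ} (hg : Continuous g)
    (hgpos : ∀ u, 0 < g u) (hh : Continuous h) (hhpos : ∀ u, 0 < h u) :
    (fun u => (∫ v, g v ∂μ)⁻¹ * g u) = (fun u => (∫ v, h v ∂μ)⁻¹ * h u) ↔ IsDilate g h := by
  have hgi := integral_pos_of_continuous_of_pos (μ := μ) hg hgpos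
  have hhi := integral_pos_of_continuous_of_pos (μ := μ) hh hhpos
  constructor
  · intro heq
    refine ⟨(∫ v, g v ∂μ) / ∫ v, h v ∂μ, div_pos hgi hhi, fun u => ?_⟩
    have := congrFun heq u
    field_simp at this ⊢
    linarith
  · rintro ⟨c, hc, hgh⟩
    have hgh' : g = fun u => c * h u := funext hgh
    subst hgh'
    ext u
    rw [integral_const_mul]
    field_simp

variable [NeZero μ]

theorem integral_prod_rpow_le (hw : ∀ i ∈ s, 0 ≤ w i) (hw1 : ∑ i ∈ s, w i = 1)
    (hf : ∀ i ∈ s, Continuous (f i)) (hfpos : ∀ i ∈ s, ∀ u, 0 < f i u) :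
    ∫ u, ∏ i ∈ s, f i u ^ w i ∂μ ≤ ∏ i ∈ s, (∫ u, f i u ∂μ) ^ w i := by
  have hint i (hi : i ∈ s) := integral_pos_of_continuous_of_pos (μ := μ) (hf i hi) (hfpos i hi)
  have hM : 0 < ∏ i ∈ s, (∫ u, f i u ∂μ) ^ w i :=
    prod_pos fun i hi => Real.rpow_pos_of_pos (hint i hi) _
  have key := integral_prod_rpow_le_one (μ := μ) (f := fun i u => (∫ v, f i v ∂μ)⁻¹ * f i u)
    hw hw1 (fun i hi => continuous_const.mul (hf i hi))
    (fun i hi u => (mul_pos (inv_pos.2 (hint i hi)) (hfpos i hi u)).le)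
    fun i hi => integral_inv_integral_mul_self (hint i hi).ne'
  rwa [integral_prod_inv_integral_mul_rpow hfpos hint, inv_mul_le_one₀ hM] at key

theorem integral_prod_rpow_eq_iff [μ.IsOpenPosMeasure] (hw : ∀ i ∈ s, 0 < w i)
    (hw1 : ∑ i ∈ s, w i = 1) (hf : ∀ i ∈ s, Continuous (f i))
    (hfpos : ∀ i ∈ s, ∀ u, 0 < f i u) :
    ∫ u, ∏ i ∈ s, f i u ^ w i ∂μ = ∏ i ∈ s, (∫ u, f i u ∂μ) ^ w i ↔
      ∀ i ∈ s, ∀ j ∈ s, IsDilate (f i) (f j) := by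
  have hint i (hi : i ∈ s) := integral_pos_of_continuous_of_pos (μ := μ) (hf i hi) (hfpos i hi)
  have hM : 0 < ∏ i ∈ s, (∫ u, f i u ∂μ) ^ w i :=
    prod_pos fun i hi => Real.rpow_pos_of_pos (hint i hi) _
  rw [eq_comm, ← inv_mul_eq_one₀ hM.ne', ← integral_prod_inv_integral_mul_rpow hfpos hint,
    integral_prod_rpow_eq_one_iff (f := fun i u => (∫ v, f i v ∂μ)⁻¹ * f i u) hw hw1
      (fun i hi => continuous_const.mul (hf i hi))
      (fun i hi u => (mul_pos (inv_pos.2 (hint i hi)) (hfpos i hi u)).le)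
      fun i hi => integral_inv_integral_mul_self (hint i hi).ne']
  exact forall₂_congr fun i hi => forall₂_congr fun j hj =>
    inv_integral_mul_eq_iff_isDilate (hf i hi) (hfpos i hi) (hf j hj) (hfpos j hj)

end Holder

section HemisphereGraph

variable {E : Type*} [NormedAddCommGroup E] [InnerProductSpace ℝ E] {x : E}

noncomputable def hemisphereGraph (x : E) (z : (ℝ ∙ x)ᗮ) : E := z + √(1 - ‖z‖ ^ 2) • x

lemma norm_add_smul_sq_of_mem_orthogonal (hx : ‖x‖ = 1) {z : E} (hz : z ∈ (ℝ ∙ x)ᗮ)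
    (t : ℝ) :
    ‖z + t • x‖ ^ 2 = ‖z‖ ^ 2 + t ^ 2 := by
  have h : inner ℝ z (t • x) = 0 := by
    rw [real_inner_smul_right, real_inner_comm,
      Submodule.mem_orthogonal_singleton_iff_inner_right.1 hz, mul_zero]
  rw [sq, sq, norm_add_sq_eq_norm_sq_add_norm_sq_of_inner_eq_zero _ _ h, norm_smul, hx,
    Real.norm_eq_abs, mul_one, abs_mul_abs_self, sq]

lemma norm_hemisphereGraph (hx : ‖x‖ = 1) {z : (ℝ ∙ x)ᗮ} (hz : ‖z‖ ≤ 1) :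
    ‖hemisphereGraph x z‖ = 1 := by
  have h := norm_add_smul_sq_of_mem_orthogonal hx z.2 (√(1 - ‖z‖ ^ 2))
  rw [Real.sq_sqrt (by nlinarith [norm_nonneg z]), Submodule.coe_norm, add_sub_cancel] at h
  exact (pow_eq_one_iff_of_nonneg (norm_nonneg _) two_ne_zero).1 h

lemma orthogonalProjectionOnto_hemisphereGraph (x : E) (z : (ℝ ∙ x)ᗮ) :
    (ℝ ∙ x)ᗮ.orthogonalProjectionOnto (hemisphereGraph x z) = z := by
  simp [hemisphereGraph, Submodule.orthogonalProjectionOnto_orthogonalComplement_singleton_eq_zero]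

lemma hemisphereGraph_orthogonalProjectionOnto (hx : ‖x‖ = 1) {y : E} (hy : ‖y‖ = 1)
    (hxy : 0 ≤ inner ℝ x y) :
    hemisphereGraph x ((ℝ ∙ x)ᗮ.orthogonalProjectionOnto y) = y := by
  set z := (ℝ ∙ x)ᗮ.orthogonalProjectionOnto y
  have hdecomp : (z : E) + inner ℝ x y • x = y := by
    rw [← Submodule.starProjection_unit_singleton ℝ hx, ← Submodule.starProjection_apply,
      add_comm]
    exact Submodule.starProjection_add_starProjection_orthogonal y
  have hz : ‖z‖ ^ 2 = 1 - inner ℝ x y ^ 2 := by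
    have h := norm_add_smul_sq_of_mem_orthogonal hx z.2 (inner ℝ x y)
    rw [hdecomp, hy] at h
    rw [Submodule.coe_norm]
    linarith
  rw [hemisphereGraph, hz, sub_sub_cancel, Real.sqrt_sq hxy, hdecomp]

lemma continuous_hemisphereGraph (x : E) : Continuous (hemisphereGraph x) := by
  unfold hemisphereGraph; fun_prop

lemma contDiffAt_hemisphereGraph (x : E) {z : (ℝ ∙ x)ᗮ} (hz : ‖z‖ < 1) :
    ContDiffAt ℝ 1 (hemisphereGraph x) z := by
  have hsqrt : ContDiffAt ℝ 1 (fun z : (ℝ ∙ x)ᗮ => √(1 - ‖z‖ ^ 2)) z :=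
    (contDiffAt_const.sub (contDiff_norm_sq ℝ).contDiffAt).sqrt
      (by nlinarith [norm_nonneg z])
  exact (ℝ ∙ x)ᗮ.subtypeL.contDiff.contDiffAt.add (hsqrt.smul contDiffAt_const)

lemma finrank_sub_one_eq_finrank_orthogonal_span_singleton [FiniteDimensional ℝ E] (hx : x ≠ 0) :
    (finrank ℝ E : ℝ) - 1 = finrank ℝ (ℝ ∙ x)ᗮ := by
  rw [← (ℝ ∙ x).finrank_add_finrank_orthogonal, finrank_span_singleton hx]
  push_cast
  ring

lemma finrank_sub_one_nonneg [FiniteDimensional ℝ E] (hx : x ≠ 0) :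
    0 ≤ (finrank ℝ E : ℝ) - 1 := by
  rw [finrank_sub_one_eq_finrank_orthogonal_span_singleton hx]
  positivity

end HemisphereGraph

section HausdorffSphere

open scoped ENNReal

variable {E : Type*} [NormedAddCommGroup E] [InnerProductSpace ℝ E] [FiniteDimensional ℝ E]
  [MeasurableSpace E] [BorelSpace E] {x : E}

lemma hausdorffMeasure_inter_sphere_pos (hx : ‖x‖ = 1) {V : Set E} (hV : IsOpen V)
    (hxV : x ∈ V) : 0 < μH[finrank ℝ E - 1] (V ∩ sphere 0 1) := by
  have hx0 : x ≠ 0 := by rintro rfl; simp at hx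
  rw [finrank_sub_one_eq_finrank_orthogonal_span_singleton hx0]
  set W : Set (ℝ ∙ x)ᗮ := ball 0 1 ∩ hemisphereGraph x ⁻¹' V
  have hW : IsOpen W := isOpen_ball.inter (hV.preimage (continuous_hemisphereGraph x))
  have hW0 : (0 : (ℝ ∙ x)ᗮ) ∈ W := ⟨mem_ball_self one_pos, by simpa [hemisphereGraph] using hxV⟩
  have hWsub : W ⊆ (ℝ ∙ x)ᗮ.orthogonalProjectionOnto '' (V ∩ sphere 0 1) := fun z hz =>
    ⟨hemisphereGraph x z,
      ⟨hz.2, mem_sphere_zero_iff_norm.2 (norm_hemisphereGraph hx (mem_ball_zero_iff.1 hz.1).le)⟩,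
      orthogonalProjectionOnto_hemisphereGraph x z⟩
  calc 0 < μH[finrank ℝ (ℝ ∙ x)ᗮ] W := hW.measure_pos _ ⟨0, hW0⟩
    _ ≤ μH[finrank ℝ (ℝ ∙ x)ᗮ] ((ℝ ∙ x)ᗮ.orthogonalProjectionOnto '' (V ∩ sphere 0 1)) :=
      measure_mono hWsub
    _ ≤ 1 ^ (finrank ℝ (ℝ ∙ x)ᗮ : ℝ) * μH[finrank ℝ (ℝ ∙ x)ᗮ] (V ∩ sphere 0 1) :=
      ((ℝ ∙ x)ᗮ.lipschitzWith_orthogonalProjectionOnto).hausdorffMeasure_image_le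
        (Nat.cast_nonneg _) _
    _ = μH[finrank ℝ (ℝ ∙ x)ᗮ] (V ∩ sphere 0 1) := by simp

lemma exists_mem_nhdsWithin_sphere_hausdorffMeasure_lt_top (hx : ‖x‖ = 1) :
    ∃ s ∈ 𝓝[sphere 0 1] x, μH[finrank ℝ E - 1] s < ∞ := by
  have hx0 : x ≠ 0 := by rintro rfl; simp at hx
  rw [finrank_sub_one_eq_finrank_orthogonal_span_singleton hx0]
  set P := (ℝ ∙ x)ᗮ.orthogonalProjectionOnto
  obtain ⟨C, t, ht, hC⟩ :=
    (contDiffAt_hemisphereGraph x (z := 0) (by simp)).exists_lipschitzOnWith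
  have hPx : P x = 0 := Submodule.orthogonalProjectionOnto_orthogonalComplement_singleton_eq_zero x
  refine ⟨sphere 0 1 ∩ {y | 0 < inner ℝ x y} ∩ P ⁻¹' (t ∩ ball 0 1), ?_, ?_⟩
  · refine Filter.inter_mem
      (Filter.inter_mem self_mem_nhdsWithin (mem_nhdsWithin_of_mem_nhds ?_))
      (mem_nhdsWithin_of_mem_nhds ?_)
    · exact (isOpen_lt continuous_const (continuous_const.inner continuous_id)).mem_nhds
        (by simp [hx])
    · refine P.continuous.continuousAt.preimage_mem_nhds ?_
      rw [hPx]
      exact Filter.inter_mem ht (ball_mem_nhds _ one_pos)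
  calc μH[finrank ℝ (ℝ ∙ x)ᗮ] (sphere 0 1 ∩ {y | 0 < inner ℝ x y} ∩ P ⁻¹' (t ∩ ball 0 1))
      ≤ μH[finrank ℝ (ℝ ∙ x)ᗮ] (hemisphereGraph x '' (t ∩ ball 0 1)) :=
        measure_mono fun y ⟨⟨hy, hxy⟩, hPy⟩ => ⟨P y, hPy,
          hemisphereGraph_orthogonalProjectionOnto hx (mem_sphere_zero_iff_norm.1 hy) hxy.le⟩
    _ ≤ C ^ (finrank ℝ (ℝ ∙ x)ᗮ : ℝ) * μH[finrank ℝ (ℝ ∙ x)ᗮ] (t ∩ ball 0 1) :=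
        (hC.mono Set.inter_subset_left).hausdorffMeasure_image_le (Nat.cast_nonneg _)
    _ < ∞ :=
      ENNReal.mul_lt_top (ENNReal.rpow_lt_top_of_nonneg (Nat.cast_nonneg _) ENNReal.coe_ne_top)
        ((measure_mono Set.inter_subset_right).trans_lt measure_ball_lt_top)

instance : IsLocallyFiniteMeasure (μH[finrank ℝ E - 1] : Measure (sphere (0 : E) 1)) := by
  refine ⟨fun u => ?_⟩
  obtain ⟨s, hs, hfin⟩ :=
    exists_mem_nhdsWithin_sphere_hausdorffMeasure_lt_top (mem_sphere_zero_iff_norm.1 u.2)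
  refine ⟨Subtype.val ⁻¹' s, preimage_coe_mem_nhds_subtype.2 hs, ?_⟩
  have hd := finrank_sub_one_nonneg (E := E) (ne_zero_of_mem_unit_sphere u)
  rw [← isometry_subtype_coe.hausdorffMeasure_image (Or.inl hd)]
  exact (measure_mono (Set.image_preimage_subset _ _)).trans_lt hfin

instance : (μH[finrank ℝ E - 1] : Measure (sphere (0 : E) 1)).IsOpenPosMeasure := by
  refine ⟨fun U hU ⟨u, hu⟩ => ?_⟩
  obtain ⟨V, hV, rfl⟩ := isOpen_induced_iff.1 hU
  have hd := finrank_sub_one_nonneg (E := E) (ne_zero_of_mem_unit_sphere u)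
  rw [← isometry_subtype_coe.hausdorffMeasure_image (Or.inl hd), Subtype.image_preimage_coe,
    Set.inter_comm]
  exact (hausdorffMeasure_inter_sphere_pos (mem_sphere_zero_iff_norm.1 u.2) hV hu).ne'

end HausdorffSphere

lemma sphereσ_eq_hausdorffMeasure (n : ℕ) :
    sphereσ n = μH[finrank ℝ (EuclideanSpace ℝ (Fin n)) - 1] := by
  rw [finrank_euclideanSpace_fin]; rfl

instance (n : ℕ) : IsFiniteMeasure (sphereσ n) := by
  rw [sphereσ_eq_hausdorffMeasure]; infer_instance

instance (n : ℕ) : (sphereσ n).IsOpenPosMeasure := by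
  rw [sphereσ_eq_hausdorffMeasure]; infer_instance

lemma prod_range_mul_rpow_inv {r : ℕ} (hr : r ≠ 0) {a : ℝ} (ha : 0 ≤ a) {b : ℕ → ℝ}
    (hb : ∀ i ∈ range r, 0 ≤ b i) :
    ∏ i ∈ range r, (a * b i) ^ (r : ℝ)⁻¹ = a * ∏ i ∈ range r, b i ^ (r : ℝ)⁻¹ := by
  rw [prod_congr rfl fun i hi => Real.mul_rpow ha (hb i hi), prod_mul_distrib, prod_const,
    card_range, Real.rpow_inv_natCast_pow ha hr]

lemma prod_range_ite_lt {M : Type*} [CommMonoid M] {r n : ℕ} (h : r ≤ n) (a : M) (g : ℕ → M) :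
    ∏ j ∈ range n, (if j < r then a else g j) = a ^ r * ∏ j ∈ Ico r n, g j := by
  rw [← prod_range_mul_prod_Ico _ h,
    prod_congr rfl fun j hj => if_pos (mem_range.1 hj), prod_const, card_range,
    prod_congr rfl fun j hj => if_neg (not_lt.2 (mem_Ico.1 hj).1)]

lemma isDilate_mul_pow_iff {X : Type*} {q a b : X → ℝ} {r : ℕ} (hr : r ≠ 0) (hq : ∀ u, q u ≠ 0)
    (ha : ∀ u, 0 ≤ a u) (hb : ∀ u, 0 ≤ b u) :
    IsDilate (fun u => q u * a u ^ r) (fun u => q u * b u ^ r) ↔ IsDilate a b := by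
  constructor
  · rintro ⟨c, hc, h⟩
    refine ⟨c ^ (r : ℝ)⁻¹, by positivity, fun u => ?_⟩
    have hpow : a u ^ r = c * b u ^ r :=
      mul_left_cancel₀ (hq u) ((h u).trans (mul_left_comm _ _ _))
    rw [← Real.pow_rpow_inv_natCast (ha u) hr, hpow, Real.mul_rpow hc.le (pow_nonneg (hb u) r),
      Real.pow_rpow_inv_natCast (hb u) hr]
  · rintro ⟨c, hc, h⟩
    exact ⟨c ^ r, by positivity, fun u => by beta_reduce; rw [h u]; ring⟩

section DualMixedVolume

variable {n r : ℕ} {ρ : ℕ → sphere (0 : EuclideanSpace ℝ (Fin n)) 1 → ℝ}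

lemma dualMixedVol_eq_integral_prod_rpow (hr : r ≠ 0) (hrn : r ≤ n)
    (hρ : ∀ i < n, ∀ u, 0 ≤ ρ i u) :
    dualMixedVol n ρ = 1 / n *
      ∫ u, ∏ i ∈ range r, ((∏ j ∈ Ico r n, ρ j u) * ρ i u ^ r) ^ (r : ℝ)⁻¹ ∂sphereσ n := by
  have hρr : ∀ i ∈ range r, ∀ u, 0 ≤ ρ i u := fun i hi => hρ i ((mem_range.1 hi).trans_le hrn)
  rw [dualMixedVol]
  congr 2 with u
  rw [prod_range_mul_rpow_inv hr (prod_nonneg fun j hj => hρ j (mem_Ico.1 hj).2 u)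
      fun i hi => pow_nonneg (hρr i hi u) r,
    prod_congr rfl fun i hi => Real.pow_rpow_inv_natCast (hρr i hi u) hr, mul_comm,
    prod_range_mul_prod_Ico _ hrn]

lemma dualMixedVol_ite (hrn : r ≤ n) (i : ℕ) :
    dualMixedVol n (fun j => if j < r then ρ i else ρ j) =
      1 / n * ∫ u, (∏ j ∈ Ico r n, ρ j u) * ρ i u ^ r ∂sphereσ n := by
  rw [dualMixedVol]
  congr 2 with u
  simp only [ite_apply]
  rw [prod_range_ite_lt hrn, mul_comm]

end DualMixedVolume

/-- The dual Aleksandrov–Fenchel inequality: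
`Ṽ(K₁,...,Kₙ) ≤ ∏_{i<r} Ṽ(Kᵢ [r], K_{r+1},...,Kₙ)^{1/r}`, with equality iff
`K₁,...,K_r` are all dilations of each other. -/
theorem dual_aleksandrov_fenchel
    (n r : ℕ) (hr1 : 1 ≤ r) (hrn : r ≤ n)
    (ρ : ℕ → (sphere (0 : EuclideanSpace ℝ (Fin n)) 1 → ℝ))
    (hcont : ∀ i < n, Continuous (ρ i))
    (hpos : ∀ i < n, ∀ u, 0 < ρ i u) :
    dualMixedVol n ρ ≤
        ∏ i ∈ Finset.range r,
          (dualMixedVol n (fun j => if j < r then ρ i else ρ j)) ^ ((r : ℝ)⁻¹) ∧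
      (dualMixedVol n ρ =
          (∏ i ∈ Finset.range r,
            (dualMixedVol n (fun j => if j < r then ρ i else ρ j)) ^ ((r : ℝ)⁻¹)) ↔
        ∀ i < r, ∀ j < r, ∃ c : ℝ, 0 < c ∧ ∀ u, ρ i u = c * ρ j u) := by
  have hn : 0 < n := hr1.trans hrn
  have hr : r ≠ 0 := by omega
  have : Nonempty (sphere (0 : EuclideanSpace ℝ (Fin n)) 1) :=
    ⟨⟨EuclideanSpace.single ⟨0, hn⟩ 1, by simp⟩⟩
  have hQ u : 0 < ∏ j ∈ Ico r n, ρ j u := prod_pos fun j hj => hpos j (mem_Ico.1 hj).2 u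
  set f := fun i u => (∏ j ∈ Ico r n, ρ j u) * ρ i u ^ r
  have hf : ∀ i ∈ range r, Continuous (f i) := fun i hi =>
    (continuous_finsetProd _ fun j hj => hcont j (mem_Ico.1 hj).2).mul
      ((hcont i ((mem_range.1 hi).trans_le hrn)).pow r)
  have hfpos : ∀ i ∈ range r, ∀ u, 0 < f i u := fun i hi u =>
    mul_pos (hQ u) (pow_pos (hpos i ((mem_range.1 hi).trans_le hrn) u) r)
  have hw : ∑ _i ∈ range r, (r : ℝ)⁻¹ = 1 := by
    rw [sum_const, card_range, nsmul_eq_mul, mul_inv_cancel₀ (by positivity)]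
  rw [dualMixedVol_eq_integral_prod_rpow hr hrn fun i hi u => (hpos i hi u).le]
  simp_rw [dualMixedVol_ite hrn]
  rw [prod_range_mul_rpow_inv hr (by positivity)
      fun i hi => (integral_pos_of_continuous_of_pos (hf i hi) (hfpos i hi)).le,
    mul_le_mul_iff_right₀ (by positivity), mul_right_inj' (by positivity),
    integral_prod_rpow_eq_iff (fun _ _ => by positivity) hw hf hfpos]
  refine ⟨integral_prod_rpow_le (fun _ _ => by positivity) hw hf hfpos, ?_⟩
  simp only [mem_range]
  exact forall₂_congr fun i hi => forall₂_congr fun j hj => isDilate_mul_pow_iff hr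
    (fun u => (hQ u).ne') (fun u => (hpos i (hi.trans_le hrn) u).le)
    fun u => (hpos j (hj.trans_le hrn) u).le
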